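/- Let d be a positive integer, r ≥ 1 a real number, and O ⊆ ℝ^d a bounded measurable set equipped with Lebesgue measure. Let (y_n) be a sequence of a.e.-strongly measurable functions y_n : O → ℝ^d and y : O → ℝ^d a measurable function such that (i) there is a constant C with ∫_O |y_n|^{r+1} dx ≤ C for all n, (ii) ∫_O |y|^{r+1} dx < ∞, and (iii) y_n(x) → y(x) for a.e. x ∈ O as n → ∞. Then for every measurable z : O → ℝ^d with ∫_O |z|^{r+1} dx < ∞, one has ∫_O ⟨|y_n(x)|^{r−1}y_n(x), z(x)⟩ dx → ∫_O ⟨|y(x)|^{r−1}y(x), z(x)⟩ dx as n → ∞. -/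

import Mathlib

open MeasureTheory Filter
open scoped RealInnerProductSpace ENNReal Topology

/-!
Pointwise `|⟨C(y_n), z⟩| ≤ |y_n|^r |z|`, so Hölder's inequality with exponents `(r+1)/r` and
`r+1` bounds `∫_s |⟨C(y_n), z⟩|` by `M^{r/(r+1)} (∫_s |z|^{r+1})^{1/(r+1)}`, where `M` bounds
`∫ |y_n|^{r+1}`; this is small uniformly in `n` once the measure of `s` is small. The integrands
are therefore uniformly integrable on the finite-measure set `O`; they converge a.e. because `C`
is continuous, and Vitali's convergence theorem yields convergence of the integrals.
-/

section Holder

variable {α : Type*} [MeasurableSpace α] {μ : Measure α} {r : ℝ}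

theorem lintegral_rpow_mul_le (hr : 0 < r) {f g : α → ℝ≥0∞} (hf : AEMeasurable f μ)
    (hg : AEMeasurable g μ) :
    ∫⁻ x, f x ^ r * g x ∂μ ≤
      (∫⁻ x, f x ^ (r + 1) ∂μ) ^ (r / (r + 1)) * (∫⁻ x, g x ^ (r + 1) ∂μ) ^ (1 / (r + 1)) := by
  have hpq : (r + 1).HolderConjugate ((r + 1) / r) :=
    (Real.holderConjugate_iff_eq_conjExponent (by linarith)).2 (by rw [add_sub_cancel_right])
  have hexp : r * ((r + 1) / r) = r + 1 := mul_div_cancel₀ _ hr.ne'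
  calc ∫⁻ x, f x ^ r * g x ∂μ
      ≤ (∫⁻ x, (f x ^ r) ^ ((r + 1) / r) ∂μ) ^ (1 / ((r + 1) / r)) *
          (∫⁻ x, g x ^ (r + 1) ∂μ) ^ (1 / (r + 1)) :=
        ENNReal.lintegral_mul_le_Lp_mul_Lq μ hpq.symm (hf.pow_const r) hg
    _ = _ := by simp only [← ENNReal.rpow_mul, hexp, one_div_div]

variable {E F G : Type*} [NormedAddCommGroup E] [NormedAddCommGroup F] [NormedAddCommGroup G]

theorem lintegral_enorm_le_of_norm_le_rpow_mul (hr : 0 < r) {g : α → G} {w : α → E}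
    {z : α → F} (hw : AEStronglyMeasurable w μ) (hz : AEStronglyMeasurable z μ)
    (hg : ∀ x, ‖g x‖ ≤ ‖w x‖ ^ r * ‖z x‖) :
    ∫⁻ x, ‖g x‖ₑ ∂μ ≤
      (∫⁻ x, ‖w x‖ₑ ^ (r + 1) ∂μ) ^ (r / (r + 1)) *
        (∫⁻ x, ‖z x‖ₑ ^ (r + 1) ∂μ) ^ (1 / (r + 1)) := by
  refine le_trans (lintegral_mono fun x => ?_) (lintegral_rpow_mul_le hr hw.enorm hz.enorm)
  rw [← ofReal_norm, ← ofReal_norm, ← ofReal_norm,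
    ENNReal.ofReal_rpow_of_nonneg (norm_nonneg _) hr.le, ← ENNReal.ofReal_mul (by positivity)]
  exact ENNReal.ofReal_le_ofReal (hg x)

theorem integrable_of_norm_le_rpow_mul (hr : 0 < r) {g : α → G} {w : α → E} {z : α → F}
    (hgm : AEStronglyMeasurable g μ) (hw : AEStronglyMeasurable w μ)
    (hz : AEStronglyMeasurable z μ) (hg : ∀ x, ‖g x‖ ≤ ‖w x‖ ^ r * ‖z x‖)
    (hw_fin : ∫⁻ x, ‖w x‖ₑ ^ (r + 1) ∂μ ≠ ∞) (hz_fin : ∫⁻ x, ‖z x‖ₑ ^ (r + 1) ∂μ ≠ ∞) :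
    Integrable g μ :=
  ⟨hgm, (lintegral_enorm_le_of_norm_le_rpow_mul hr hw hz hg).trans_lt <|
    ENNReal.mul_lt_top (ENNReal.rpow_lt_top_of_nonneg (by positivity) hw_fin)
      (ENNReal.rpow_lt_top_of_nonneg (by positivity) hz_fin)⟩

theorem unifIntegrable_of_norm_le_rpow_mul (hr : 0 < r) {g : ℕ → α → G} {w : ℕ → α → E}
    {z : α → F} (hw : ∀ n, AEStronglyMeasurable (w n) μ) (hz : AEStronglyMeasurable z μ)
    (hg : ∀ n x, ‖g n x‖ ≤ ‖w n x‖ ^ r * ‖z x‖) {M : ℝ≥0∞} (hM : M ≠ ∞)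
    (hw_le : ∀ n, ∫⁻ x, ‖w n x‖ₑ ^ (r + 1) ∂μ ≤ M) (hz_fin : ∫⁻ x, ‖z x‖ₑ ^ (r + 1) ∂μ ≠ ∞) :
    UnifIntegrable g 1 μ := by
  intro ε hε
  have hsmall : Tendsto (fun η : ℝ≥0∞ => M ^ (r / (r + 1)) * η ^ (1 / (r + 1))) (𝓝 0)
      (𝓝 0) := by
    have := ENNReal.Tendsto.const_mul
      ((ENNReal.continuous_rpow_const (y := 1 / (r + 1))).tendsto 0)
      (Or.inr (ENNReal.rpow_ne_top_of_nonneg (by positivity) hM) : _ ∨ M ^ (r / (r + 1)) ≠ ∞)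
    rwa [ENNReal.zero_rpow_of_pos (by positivity), mul_zero] at this
  obtain ⟨η, hη_le, hη_pos⟩ := ((hsmall.mono_left nhdsWithin_le_nhds).eventually
    (eventually_le_nhds (ENNReal.ofReal_pos.2 hε))).and
    (self_mem_nhdsWithin (s := Set.Ioi 0)) |>.exists
  obtain ⟨δ, hδ_pos, hδ⟩ := exists_pos_setLIntegral_lt_of_measure_lt hz_fin
    (ne_of_gt (hη_pos : (0 : ℝ≥0∞) < η))
  obtain ⟨δ', -, hδ'_pos, hδ'_lt⟩ := ENNReal.lt_iff_exists_real_btwn.1 hδ_pos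
  refine ⟨δ', ENNReal.ofReal_pos.1 hδ'_pos, fun n s hs hμs => ?_⟩
  rw [eLpNorm_indicator_eq_eLpNorm_restrict hs, eLpNorm_one_eq_lintegral_enorm]
  calc ∫⁻ x in s, ‖g n x‖ₑ ∂μ
      ≤ (∫⁻ x in s, ‖w n x‖ₑ ^ (r + 1) ∂μ) ^ (r / (r + 1)) *
          (∫⁻ x in s, ‖z x‖ₑ ^ (r + 1) ∂μ) ^ (1 / (r + 1)) :=
        lintegral_enorm_le_of_norm_le_rpow_mul hr (hw n).restrict hz.restrict (hg n)
    _ ≤ M ^ (r / (r + 1)) * η ^ (1 / (r + 1)) := by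
        gcongr
        · exact (setLIntegral_le_lintegral s _).trans (hw_le n)
        · exact (hδ s (hμs.trans_lt hδ'_lt)).le
    _ ≤ ENNReal.ofReal ε := hη_le

end Holder

theorem tendsto_integral_of_unifIntegrable {α : Type*} [MeasurableSpace α] {μ : Measure α}
    [IsFiniteMeasure μ] {G : Type*} [NormedAddCommGroup G] [NormedSpace ℝ G]
    {f : ℕ → α → G} {g : α → G} (hf : ∀ n, Integrable (f n) μ) (hg : Integrable g μ)
    (hui : UnifIntegrable f 1 μ) (hfg : ∀ᵐ x ∂μ, Tendsto (fun n => f n x) atTop (𝓝 (g x))) :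
    Tendsto (fun n => ∫ x, f n x ∂μ) atTop (𝓝 (∫ x, g x ∂μ)) := by
  have hL1 := tendsto_Lp_finite_of_tendsto_ae le_rfl ENNReal.one_ne_top
    (fun n => (hf n).aestronglyMeasurable) (memLp_one_iff_integrable.2 hg) hui hfg
  simp only [eLpNorm_one_eq_lintegral_enorm, Pi.sub_apply] at hL1
  exact tendsto_integral_of_L1 g hg.aestronglyMeasurable (Eventually.of_forall hf) hL1

section Damping

variable {E : Type*} [NormedAddCommGroup E] [InnerProductSpace ℝ E] {r : ℝ}

noncomputable def damping (r : ℝ) (v : E) : E := (‖v‖ ^ (r - 1)) • v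

theorem norm_damping (hr : r ≠ 0) (v : E) : ‖damping r v‖ = ‖v‖ ^ r := by
  rcases eq_or_ne v 0 with rfl | hv
  · simp [damping, Real.zero_rpow hr]
  · rw [damping, norm_smul, Real.norm_of_nonneg (by positivity),
      Real.rpow_sub_one (norm_ne_zero_iff.2 hv), div_mul_cancel₀ _ (norm_ne_zero_iff.2 hv)]

theorem continuous_damping (hr : 1 ≤ r) : Continuous (damping (E := E) r) :=
  (continuous_norm.rpow_const fun _ => Or.inr (sub_nonneg.2 hr)).smul continuous_id

theorem norm_inner_damping_le (hr : r ≠ 0) (v u : E) : ‖⟪damping r v, u⟫‖ ≤ ‖v‖ ^ r * ‖u‖ :=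
  norm_damping hr v ▸ norm_inner_le_norm _ _

end Damping

theorem ofReal_norm_rpow {E : Type*} [NormedAddCommGroup E] {p : ℝ} (hp : 0 ≤ p) (v : E) :
    ENNReal.ofReal (‖v‖ ^ p) = ‖v‖ₑ ^ p := by
  rw [← ENNReal.ofReal_rpow_of_nonneg (norm_nonneg v) hp, ofReal_norm]

theorem damping_weak_convergence_general (d : ℕ) (r : ℝ) (hr : 1 ≤ r)
    (O : Set (EuclideanSpace ℝ (Fin d)))
    (hObdd : Bornology.IsBounded O)
    (y : ℕ → EuclideanSpace ℝ (Fin d) → EuclideanSpace ℝ (Fin d))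
    (y₀ : EuclideanSpace ℝ (Fin d) → EuclideanSpace ℝ (Fin d))
    (hy : ∀ n, AEStronglyMeasurable (y n) (volume.restrict O))
    (hy₀ : Measurable y₀)
    (C : ℝ)
    (hbound : ∀ n, ∫⁻ x in O, ENNReal.ofReal (‖y n x‖ ^ (r + 1)) ≤ ENNReal.ofReal C)
    (hy₀int : ∫⁻ x in O, ENNReal.ofReal (‖y₀ x‖ ^ (r + 1)) < ⊤)
    (hae : ∀ᵐ x ∂(volume.restrict O), Tendsto (fun n => y n x) atTop (𝓝 (y₀ x))) :
    ∀ z : EuclideanSpace ℝ (Fin d) → EuclideanSpace ℝ (Fin d), Measurable z →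
      (∫⁻ x in O, ENNReal.ofReal (‖z x‖ ^ (r + 1)) < ⊤) →
      Tendsto (fun n => ∫ x in O, ⟪(‖y n x‖ ^ (r - 1)) • y n x, z x⟫) atTop
        (𝓝 (∫ x in O, ⟪(‖y₀ x‖ ^ (r - 1)) • y₀ x, z x⟫)) := by
  intro z hz hz_fin
  have hr₀ : 0 < r := by linarith
  set μ := volume.restrict O
  have : IsFiniteMeasure μ := ⟨by simpa [μ] using hObdd.measure_lt_top⟩
  simp only [ofReal_norm_rpow (by linarith : 0 ≤ r + 1)] at hbound hy₀int hz_fin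
  have hzm : AEStronglyMeasurable z μ := hz.aestronglyMeasurable
  have hbd (v u : EuclideanSpace ℝ (Fin d)) := norm_inner_damping_le hr₀.ne' v u
  have hint {w : EuclideanSpace ℝ (Fin d) → EuclideanSpace ℝ (Fin d)}
      (hw : AEStronglyMeasurable w μ) (hw_fin : ∫⁻ x, ‖w x‖ₑ ^ (r + 1) ∂μ ≠ ∞) :
      Integrable (fun x => ⟪damping r (w x), z x⟫) μ :=
    integrable_of_norm_le_rpow_mul hr₀
      (((continuous_damping hr).comp_aestronglyMeasurable hw).inner hzm) hw hzm
      (fun _ => hbd _ _) hw_fin hz_fin.ne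
  refine tendsto_integral_of_unifIntegrable
    (fun n => hint (hy n) ((hbound n).trans_lt ENNReal.ofReal_lt_top).ne)
    (hint hy₀.aestronglyMeasurable hy₀int.ne)
    (unifIntegrable_of_norm_le_rpow_mul hr₀ hy hzm (fun _ _ => hbd _ _) ENNReal.ofReal_ne_top
      hbound hz_fin.ne) ?_
  filter_upwards [hae] with x hx
  exact (((continuous_damping hr).tendsto _).comp hx).inner tendsto_const_nhds

/-- weak convergence of the damping Nemytskii operator: if `O ⊆ ℝ^d` is
bounded and measurable, `(y_n)` are a.e.-strongly measurable with
`∫_O |y_n|^{r+1} ≤ C`, `y` is measurable with `∫_O |y|^{r+1} < ∞`, and `y_n → y` a.e.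
on `O`, then for every measurable `z` with `∫_O |z|^{r+1} < ∞`,
`∫_O ⟨|y_n|^{r-1}y_n, z⟩ → ∫_O ⟨|y|^{r-1}y, z⟩`. -/
theorem damping_weak_convergence (d : ℕ) (hd : 0 < d) (r : ℝ) (hr : 1 ≤ r)
    (O : Set (EuclideanSpace ℝ (Fin d)))
    (hObdd : Bornology.IsBounded O) (hOmeas : MeasurableSet O)
    (y : ℕ → EuclideanSpace ℝ (Fin d) → EuclideanSpace ℝ (Fin d))
    (y₀ : EuclideanSpace ℝ (Fin d) → EuclideanSpace ℝ (Fin d))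
    (hy : ∀ n, AEStronglyMeasurable (y n) (volume.restrict O))
    (hy₀ : Measurable y₀)
    (C : ℝ)
    (hbound : ∀ n, ∫⁻ x in O, ENNReal.ofReal (‖y n x‖ ^ (r + 1)) ≤ ENNReal.ofReal C)
    (hy₀int : ∫⁻ x in O, ENNReal.ofReal (‖y₀ x‖ ^ (r + 1)) < ⊤)
    (hae : ∀ᵐ x ∂(volume.restrict O), Tendsto (fun n => y n x) atTop (𝓝 (y₀ x))) :
    ∀ z : EuclideanSpace ℝ (Fin d) → EuclideanSpace ℝ (Fin d), Measurable z →
      (∫⁻ x in O, ENNReal.ofReal (‖z x‖ ^ (r + 1)) < ⊤) →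
      Tendsto (fun n => ∫ x in O, ⟪(‖y n x‖ ^ (r - 1)) • y n x, z x⟫) atTop
        (𝓝 (∫ x in O, ⟪(‖y₀ x‖ ^ (r - 1)) • y₀ x, z x⟫)) :=
  damping_weak_convergence_general d r hr O hObdd y y₀ hy hy₀ C hbound hy₀int hae
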